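/- arXiv:2412.16793 — 3 statements merged into one kernel-verified Lean document; each statement's English description precedes it below -/
import Mathlib

section
/- If (c_n) and (d_n) are bounded sequences of natural numbers and d_n = max(c_n, c_{n+1}) for all n, then (c_n) is parity accepting if and only if (d_n) is parity accepting. -/
/-!
If `v` is the largest value recurring in the bounded sequence `c`, the finitely many larger values
all stop occurring, so eventually `c ≤ v`. From then on every occurrence of `v` in `c` is one in
`d n = max (c n) (c (n + 1))`, while every value recurring in `d` recurs in `c`. Symmetrically,
eventually `d ≤ v'` for the largest value `v'` recurring in `d`, and `c n ≤ d n`. So `c` and `d`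
have the same largest recurring value.
-/

def InfOften (c : ℕ → ℕ) (v : ℕ) : Prop := ∀ n : ℕ, ∃ m, n ≤ m ∧ c m = v

def MaxInfRec (c : ℕ → ℕ) (v : ℕ) : Prop :=
  InfOften c v ∧ ∀ w, InfOften c w → w ≤ v

def ParityAccepting (c : ℕ → ℕ) : Prop := ∃ v, MaxInfRec c v ∧ Even v

open Filter

variable {c d : ℕ → ℕ} {B v w : ℕ}

theorem infOften_iff_frequently : InfOften c v ↔ ∃ᶠ n in atTop, c n = v :=
  frequently_atTop.symm

theorem InfOften.of_eq_max (h : ∀ n, d n = max (c n) (c (n + 1))) (hw : InfOften d w) :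
    InfOften c w := by
  intro n
  obtain ⟨m, hm, hdm⟩ := hw n
  rcases max_choice (c m) (c (m + 1)) with hcm | hcm
  · exact ⟨m, hm, by rw [← hcm, ← h m, hdm]⟩
  · exact ⟨m + 1, hm.trans m.le_succ, by rw [← hcm, ← h m, hdm]⟩

theorem MaxInfRec.eventually_le (hB : ∀ n, c n ≤ B) (hv : MaxInfRec c v) :
    ∀ᶠ n in atTop, c n ≤ v := by
  have hrare : ∀ w ∈ Finset.Ioc v B, ∀ᶠ n in atTop, c n ≠ w := fun w hw => by
    have hnot : ¬ InfOften c w := fun hw' => (Finset.mem_Ioc.1 hw).1.not_ge (hv.2 w hw')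
    simpa only [infOften_iff_frequently, not_frequently] using hnot
  filter_upwards [(eventually_all_finset _).2 hrare] with n hn
  by_contra hlt
  exact hn (c n) (Finset.mem_Ioc.2 ⟨not_le.1 hlt, hB n⟩) rfl

theorem maxInfRec_iff_of_eq_max (hBc : ∀ n, c n ≤ B) (hBd : ∀ n, d n ≤ B)
    (h : ∀ n, d n = max (c n) (c (n + 1))) : MaxInfRec c v ↔ MaxInfRec d v := by
  constructor
  · intro hv
    refine ⟨?_, fun w hw => hv.2 w (hw.of_eq_max h)⟩
    have hnext : ∀ᶠ n in atTop, c (n + 1) ≤ v :=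
      (tendsto_add_atTop_nat 1).eventually (hv.eventually_le hBc)
    rw [infOften_iff_frequently]
    exact ((infOften_iff_frequently.1 hv.1).and_eventually hnext).mono fun n ⟨hcn, hcn'⟩ => by
      rw [h n, hcn, max_eq_left hcn']
  · intro hv
    refine ⟨hv.1.of_eq_max h, fun w hw => ?_⟩
    rw [infOften_iff_frequently] at hw
    obtain ⟨n, rfl, hdn⟩ := (hw.and_eventually (hv.eventually_le hBd)).exists
    exact (le_max_left _ _).trans (h n ▸ hdn)

/-- if `d n = max (c n) (c (n+1))` then `c` is parity accepting
iff `d` is. -/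
theorem stmt3 (c d : ℕ → ℕ) (B : ℕ) (hBc : ∀ n, c n ≤ B) (hBd : ∀ n, d n ≤ B)
    (h : ∀ n, d n = max (c n) (c (n + 1))) :
    ParityAccepting c ↔ ParityAccepting d :=
  exists_congr fun _ => and_congr_left fun _ => maxInfRec_iff_of_eq_max hBc hBd h
end

section
/- Let t be an infinite binary tree labeled in Σ and let u, v be words with v nonempty. Define t* to be the tree obtained from t by replacing, recursively for all n, the subtree at position u·vⁿ by the subtree of t at position u. Then for every branch b of t* not equal to u·v^ω (past u), the sequence of labels along b in t* eventually coincides with the sequence of labels along some branch of t. -/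
def pref (b : ℕ → Bool) (n : ℕ) : List Bool := List.ofFn (fun i : Fin n => b i)

/-- The infinite word `u · v^ω`, as a function `ℕ → Bool`. -/
def uvOmega (u v : List Bool) : ℕ → Bool := fun n =>
  if n < u.length then u.getD n false
  else v.getD ((n - u.length) % v.length) false

/-!
If the branch `b` does not start with `u·v`, then `t*` agrees with `t` along all of `b`.
Otherwise, since `b ≠ u·v^ω`, there is a largest `n` with `u·vⁿ` a prefix of `b`; write
`b = u·vⁿ·c`. Pumping gives `t*(u·vⁿ·w) = t*(u·w)`, and `u·v` is not a prefix of `u·w` for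
any finite prefix `w` of `c` by maximality of `n`, so from position `|u·vⁿ|` on, the labels
of `t*` along `b` are those of `t` along the branch `u·c`.
-/

def prependBranch (x : List Bool) (c : ℕ → Bool) : ℕ → Bool := fun i =>
  if i < x.length then x.getD i false else c (i - x.length)

section Prefixes

variable (b : ℕ → Bool)

lemma pref_length (n : ℕ) : (pref b n).length = n := by
  simp [pref]

lemma pref_getD {n i : ℕ} (h : i < n) : (pref b n).getD i false = b i := by
  simp [pref, h]

lemma pref_add (a m : ℕ) : pref b (a + m) = pref b a ++ pref (fun j => b (a + j)) m := by
  simp [pref, List.ofFn_add]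

lemma pref_prefix_pref {a m : ℕ} (h : a ≤ m) : pref b a <+: pref b m := by
  obtain ⟨d, rfl⟩ := Nat.exists_eq_add_of_le h
  exact ⟨_, (pref_add b a d).symm⟩

variable {b}

lemma prefix_pref_iff {x : List Bool} {m : ℕ} :
    x <+: pref b m ↔ x.length ≤ m ∧ pref b x.length = x := by
  constructor
  · intro hx
    have hle : x.length ≤ m := by simpa [pref_length] using hx.length_le
    exact ⟨hle, (List.prefix_of_prefix_length_le (pref_prefix_pref b hle) hx
      (by simp [pref_length])).eq_of_length (pref_length b _)⟩
  · rintro ⟨hle, hx⟩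
    exact hx ▸ pref_prefix_pref b hle

lemma ext_of_pref {c : ℕ → Bool} (h : ∀ i, ∃ m, i < m ∧ pref b m = pref c m) : b = c := by
  funext i
  obtain ⟨m, him, hm⟩ := h i
  rw [← pref_getD b him, hm, pref_getD c him]

end Prefixes

lemma pref_prependBranch (x : List Bool) (c : ℕ → Bool) (m : ℕ) :
    pref (prependBranch x c) (x.length + m) = x ++ pref c m := by
  rw [pref_add]
  congr 1
  · conv_rhs => rw [← List.ofFn_getElem (xs := x)]
    simp [pref, prependBranch]
  · simp [pref, prependBranch]

lemma pref_uvOmega (u v : List Bool) (n : ℕ) :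
    pref (uvOmega u v) (u.length + n * v.length) = u ++ (List.replicate n v).flatten := by
  induction n with
  | zero =>
    conv_rhs => rw [← List.ofFn_getElem (xs := u)]
    simp [pref, uvOmega]
  | succ n ih =>
    rw [Nat.succ_mul, ← Nat.add_assoc, pref_add, ih, List.replicate_succ',
      List.flatten_append, List.flatten_singleton, List.append_assoc]
    congr 2
    conv_rhs => rw [← List.ofFn_getElem (xs := v)]
    simp [pref, uvOmega, Nat.add_assoc, Nat.mod_eq_of_lt]

lemma eq_uvOmega_of_forall_pref {b : ℕ → Bool} {u v : List Bool} (hv : v ≠ [])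
    (h : ∀ n, pref b (u.length + n * v.length) = u ++ (List.replicate n v).flatten) :
    b = uvOmega u v := by
  refine ext_of_pref fun i => ⟨u.length + (i + 1) * v.length, ?_, by rw [h, pref_uvOmega]⟩
  have := Nat.le_mul_of_pos_right (i + 1) (List.length_pos_iff.mpr hv)
  omega

lemma apply_append_flatten_replicate {α β : Type*} (f : List α → β) {u v : List α}
    (hf : ∀ y, f (u ++ v ++ y) = f (u ++ y)) (n : ℕ) (w : List α) :
    f (u ++ (List.replicate n v).flatten ++ w) = f (u ++ w) := by
  induction n with
  | zero => simp
  | succ n ih =>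
    rw [List.replicate_succ, List.flatten_cons, ← List.append_assoc u, List.append_assoc _ _ w, hf,
      ← List.append_assoc, ih]

lemma Nat.exists_and_not_succ_of_not_forall {P : ℕ → Prop} (h0 : P 0) (h : ¬ ∀ n, P n) :
    ∃ n, P n ∧ ¬ P (n + 1) := by
  by_contra! hsucc
  exact h fun n => Nat.rec h0 hsucc n

/-- let `t*` be the pumped tree obtained from `t` by recursively
replacing the subtree at `u·vⁿ` by the subtree of `t` at `u` (characterised by
`h1`, `h2`). Then along every branch `b ≠ u·v^ω`, the label sequence of `t*`
eventually coincides with the label sequence of `t` along some branch. -/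
theorem stmt6 (σ : Type) (t tstar : List Bool → σ) (u v : List Bool) (hv : v ≠ [])
    (h1 : ∀ x : List Bool, ¬ (u ++ v) <+: x → tstar x = t x)
    (h2 : ∀ y : List Bool, tstar (u ++ v ++ y) = tstar (u ++ y))
    (b : ℕ → Bool) (hb : b ≠ uvOmega u v) :
    ∃ (b' : ℕ → Bool) (k l : ℕ),
      ∀ m : ℕ, tstar (pref b (k + m)) = t (pref b' (l + m)) := by
  set P : ℕ → Prop := fun n =>
    pref b (u.length + n * v.length) = u ++ (List.replicate n v).flatten
  by_cases hu : ¬ P 0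
  · refine ⟨b, 0, 0, fun m => h1 _ fun huv => hu ?_⟩
    simpa [P] using (prefix_pref_iff.1 (List.prefix_append u v |>.trans huv)).2
  rw [not_not] at hu
  obtain ⟨n, hn, hn1⟩ :=
    Nat.exists_and_not_succ_of_not_forall hu fun h => hb (eq_uvOmega_of_forall_pref hv h)
  have hk : pref b (u.length + n * v.length) = u ++ (List.replicate n v).flatten := hn
  set k := u.length + n * v.length
  refine ⟨prependBranch u fun j => b (k + j), k, u.length, fun m => ?_⟩
  rw [pref_add, hk, apply_append_flatten_replicate tstar h2, pref_prependBranch]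
  refine h1 _ fun huv => hn1 ?_
  have hcv : pref (fun j => b (k + j)) v.length = v :=
    (prefix_pref_iff.1 ((List.prefix_append_right_inj u).1 huv)).2
  change pref b (u.length + (n + 1) * v.length) = _
  rw [show u.length + (n + 1) * v.length = k + v.length by ring, pref_add, hk, hcv,
    List.replicate_succ', List.flatten_append, List.flatten_singleton, List.append_assoc]
end

section
/- In the J,N-priority transduction game over a parity graph, if from some point on every priority i chosen is at most some odd i*, i* is chosen infinitely often, and Eve only ever chooses registers of index at most j* (with j* chosen infinitely often), then the register r_{j*} takes the value i* at infinitely many steps where Eve chooses r_{j*}. -/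
/-- Parameters of the `J,N`-priority transduction game: the output index
`J = [Jmin, Jmax]` (with `Jmin ∈ {1,2}`) and the counter bound `N`. -/
structure TransGame where
  Jmin : ℕ
  Jmax : ℕ
  N : ℕ

/-- The game has a register `r_j` for each even `2j ∈ J`, plus `r_0` iff `1 ∈ J`. -/
def TransGame.IsReg (G : TransGame) (j : ℕ) : Prop :=
  (j = 0 ∧ G.Jmin = 1) ∨ (G.Jmin ≤ 2 * j ∧ 2 * j ≤ G.Jmax)

/-- A play of the `J,N`-priority transduction game over a fixed infinite path
with edge labels `ℓ` (an Adam-only parity graph): at step `n`, Eve chooses the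
register `choice n` and (choice ♯) a priority `pick n ≥ ℓ n` of matching parity
constraint; `reg n j` and `cnt n i j` are the register and counter values before
step `n` (registers initialised to `imin = min I`, counters to `0`), and
`out n` is the output priority produced at step `n`. Reaching the counter value
`N` (i.e. `N+1` counted choices) triggers the odd output `2j+1` and a reset. -/
structure TPlay (G : TransGame) (imin : ℕ) (ℓ : ℕ → ℕ) where
  choice : ℕ → ℕ
  pick : ℕ → ℕ
  reg : ℕ → ℕ → ℕ
  cnt : ℕ → ℕ → ℕ → ℕ
  out : ℕ → ℕ
  choice_isReg : ∀ n, G.IsReg (choice n)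
  pick_even : ∀ n, Even (ℓ n) → pick n = ℓ n
  pick_odd : ∀ n, ¬ Even (ℓ n) → ¬ Even (pick n) ∧ ℓ n ≤ pick n
  reg_init : ∀ j, reg 0 j = imin
  cnt_init : ∀ i j, cnt 0 i j = 0
  out_zero : ∀ n, choice n = 0 → out n = 1
  out_even : ∀ n, choice n ≠ 0 → Even (reg n (choice n)) → out n = 2 * choice n
  out_full : ∀ n, choice n ≠ 0 → ¬ Even (reg n (choice n)) →
      cnt n (reg n (choice n)) (choice n) = G.N → out n = 2 * choice n + 1
  out_incr : ∀ n, choice n ≠ 0 → ¬ Even (reg n (choice n)) →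
      cnt n (reg n (choice n)) (choice n) ≠ G.N → out n = 2 * choice n
  reg_lt : ∀ n j, j < choice n → reg (n + 1) j = reg n j
  reg_eq : ∀ n, reg (n + 1) (choice n) = pick n
  reg_gt : ∀ n j, choice n < j → reg (n + 1) j = max (pick n) (reg n j)
  cnt_upd : ∀ n i j,
    cnt (n + 1) i j =
      if i < pick n ∧ j = choice n then 0
      else if i = pick n ∧ j < choice n then 0
      else if i = reg n (choice n) ∧ j = choice n ∧ choice n ≠ 0 ∧
          ¬ Even (reg n (choice n)) then
        (if cnt n i j = G.N then 0 else cnt n i j + 1)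
      else cnt n i j

/-- Eve wins a play iff no output ever leaves `J` (no instant loss) and the
output sequence is parity accepting. -/
def TPlay.EveWins {G : TransGame} {imin : ℕ} {ℓ : ℕ → ℕ} (p : TPlay G imin ℓ) : Prop :=
  (∀ n, p.out n ∈ Finset.Icc G.Jmin G.Jmax) ∧ ParityAccepting p.out

/-!
Once Eve only chooses registers `r_j` with `j ≤ j*` and priorities `i ≤ i*`, every update of
`r_{j*}` replaces it by a priority or by the maximum of a priority and its old value, so after the
first choice of `r_{j*}` it stays `≤ i*`. A later choice of `i*` lifts `r_{j*}` to at least `i*`,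
and between consecutive choices of `r_{j*}` its value cannot decrease; hence at the next choice of
`r_{j*}` its value is exactly `i*`.
-/

namespace TPlay

variable {G : TransGame} {imin : ℕ} {ℓ : ℕ → ℕ} (p : TPlay G imin ℓ)

theorem reg_succ_le_max {n j : ℕ} (h : p.choice n ≤ j) :
    p.reg (n + 1) j ≤ max (p.pick n) (p.reg n j) := by
  rcases h.lt_or_eq with h | rfl
  · exact (p.reg_gt n j h).le
  · exact (p.reg_eq n).trans_le (le_max_left _ _)

theorem pick_le_reg_succ {n j : ℕ} (h : p.choice n ≤ j) : p.pick n ≤ p.reg (n + 1) j := by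
  rcases h.lt_or_eq with h | rfl
  · exact (p.reg_gt n j h).symm ▸ le_max_left _ _
  · exact (p.reg_eq n).ge

theorem reg_le_reg_succ {n j : ℕ} (h : p.choice n < j) : p.reg n j ≤ p.reg (n + 1) j :=
  (p.reg_gt n j h).symm ▸ le_max_right _ _

theorem reg_le_of_forall_le {a i j : ℕ} (hc : ∀ k, a ≤ k → p.choice k ≤ j)
    (hp : ∀ k, a ≤ k → p.pick k ≤ i) (ha : p.reg a j ≤ i) {b : ℕ} (hab : a ≤ b) :
    p.reg b j ≤ i := by
  induction b, hab using Nat.le_induction with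
  | base => exact ha
  | succ k hk ih => exact (p.reg_succ_le_max (hc k hk)).trans (max_le (hp k hk) ih)

theorem reg_mono_of_forall_choice_lt {a b j : ℕ} (hab : a ≤ b)
    (h : ∀ k, a ≤ k → k < b → p.choice k < j) : p.reg a j ≤ p.reg b j := by
  induction b, hab using Nat.le_induction with
  | base => exact le_rfl
  | succ k hk ih =>
    exact (ih fun l hal hlk => h l hal (hlk.trans k.lt_succ_self)).trans
      (p.reg_le_reg_succ (h k hk k.lt_succ_self))

end TPlay

theorem stmt10_general (G : TransGame) (imin : ℕ) (ℓ : ℕ → ℕ) (p : TPlay G imin ℓ)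
    (istar jstar n₀ : ℕ)
    (hile : ∀ n, n₀ ≤ n → p.pick n ≤ istar)
    (hiinf : ∀ n, ∃ m, n ≤ m ∧ p.pick m = istar)
    (hjle : ∀ n, n₀ ≤ n → p.choice n ≤ jstar)
    (hjinf : ∀ n, ∃ m, n ≤ m ∧ p.choice m = jstar) :
    ∀ n, ∃ m, n ≤ m ∧ p.choice m = jstar ∧ p.reg m jstar = istar := by
  classical
  intro n
  obtain ⟨m₁, hm₁, hc₁⟩ := hjinf (max n n₀)
  have hbound : ∀ k, m₁ + 1 ≤ k → p.reg k jstar ≤ istar := fun k =>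
    p.reg_le_of_forall_le (fun k _ => hjle k (by omega)) (fun k _ => hile k (by omega))
      (by rw [← hc₁, p.reg_eq]; exact hile m₁ (by omega))
  obtain ⟨m₂, hm₂, hp₂⟩ := hiinf (m₁ + 1)
  have hnext : ∃ m, m₂ + 1 ≤ m ∧ p.choice m = jstar := hjinf (m₂ + 1)
  obtain ⟨hm₃, hc₃⟩ := Nat.find_spec hnext
  refine ⟨Nat.find hnext, by omega, hc₃, le_antisymm (hbound _ (by omega)) ?_⟩
  calc istar = p.pick m₂ := hp₂.symm
    _ ≤ p.reg (m₂ + 1) jstar := p.pick_le_reg_succ (hjle m₂ (by omega))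
    _ ≤ p.reg (Nat.find hnext) jstar := p.reg_mono_of_forall_choice_lt hm₃ fun k hk hlt =>
      (hjle k (by omega)).lt_of_ne fun hk' => Nat.find_min hnext hlt ⟨hk, hk'⟩

/-- if eventually every chosen priority is at most the odd `i*`,
`i*` is chosen infinitely often, eventually every chosen register has index at
most `j*`, and `j*` is chosen infinitely often, then `r_{j*}` holds the value
`i*` at infinitely many steps at which Eve chooses `r_{j*}`. -/
theorem stmt10 (G : TransGame) (imin : ℕ) (ℓ : ℕ → ℕ) (p : TPlay G imin ℓ)
    (istar jstar n₀ : ℕ) (hodd : ¬ Even istar)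
    (hile : ∀ n, n₀ ≤ n → p.pick n ≤ istar)
    (hiinf : ∀ n, ∃ m, n ≤ m ∧ p.pick m = istar)
    (hjle : ∀ n, n₀ ≤ n → p.choice n ≤ jstar)
    (hjinf : ∀ n, ∃ m, n ≤ m ∧ p.choice m = jstar) :
    ∀ n, ∃ m, n ≤ m ∧ p.choice m = jstar ∧ p.reg m jstar = istar :=
  stmt10_general G imin ℓ p istar jstar n₀ hile hiinf hjle hjinf
end
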